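/- Appendix operator identity II: For every smooth function f : ℝ → ℝ, setting g(x) = −( b·Q(x)·f'(x) + Q'(x)·f(x) ), one has for all x ∈ ℝ: (α·g')'(x) + b(b+1)·α(x)·g(x) = −b·Q(x)^{−1/b−1}·( f'''(x) − f'(x) ) + ((b²−b³)/(2k))·f'(x). -/

import Mathlib

open Real MeasureTheory Filter

noncomputable section

/-- `ν = -(b+1)/2`. -/
def nuP (b : ℝ) : ℝ := -(b + 1) / 2

/-- The lefton momentum profile `Q(x) = (A(1-b)/2) (cosh(νx))^{b/ν}`. -/
def Qp (b A : ℝ) (x : ℝ) : ℝ :=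
  A * (1 - b) / 2 * cosh (nuP b * x) ^ (b / nuP b)

/-- The lefton velocity profile `q(x) = A (cosh(νx))^{-1/ν}`. -/
def qp (b A : ℝ) (x : ℝ) : ℝ := A * cosh (nuP b * x) ^ (-1 / nuP b)

/-- `k = (A(1-b)/2)^{1/b+1}`. -/
def kP (b A : ℝ) : ℝ := (A * (1 - b) / 2) ^ (1 / b + 1)

/-- The weight `α(x) = Q(x)^{-1/b-2}`. -/
def alphaP (b A : ℝ) (x : ℝ) : ℝ := Qp b A x ^ (-1 / b - 2)

/-- `SQ(x) = (2k(1-b)/b) Q^{-1/b} + (2(b-1)/b) Q`. -/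
def SQp (b A : ℝ) (x : ℝ) : ℝ :=
  2 * kP b A * (1 - b) / b * Qp b A x ^ (-1 / b) + 2 * (b - 1) / b * Qp b A x

/-- The Pöschl–Teller potential `H̃₀(x) = 1/4 - (b(1+2b)/4) sech²(νx)`. -/
def Htilde0 (b : ℝ) (x : ℝ) : ℝ :=
  1 / 4 - b * (1 + 2 * b) / 4 * (1 / cosh (nuP b * x)) ^ 2

/-- The Schrödinger operator `(Hg)(x) = (2k/b²)(−g'' + H̃₀ g)`. -/
def Hop (b A : ℝ) (g : ℝ → ℝ) (x : ℝ) : ℝ :=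
  2 * kP b A / b ^ 2 * (-(deriv (deriv g) x) + Htilde0 b x * g x)

/-- The linearized operator `(𝓛f)(x) = k(−((2α/b²) f')' − (2(b+1)/b) α f)`. -/
def Lop (b A : ℝ) (f : ℝ → ℝ) (x : ℝ) : ℝ :=
  kP b A * (-(deriv (fun y => 2 * alphaP b A y / b ^ 2 * deriv f y) x)
    - 2 * (b + 1) / b * alphaP b A x * f x)

/-- The integrand of the conserved functional `F₂`. -/
def F2Integrand (b : ℝ) (f : ℝ → ℝ) (x : ℝ) : ℝ :=
  f x ^ (-1 / b) * ((deriv f x) ^ 2 / (b ^ 2 * f x ^ 2) + 1)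

/-- The squared weighted norm `‖f‖²_{H¹_α} = ∫ (f² + f'²) α`. -/
def HalphaSq (b A : ℝ) (f : ℝ → ℝ) : ℝ :=
  ∫ x, (f x ^ 2 + deriv f x ^ 2) * alphaP b A x

/-- The `𝒵`-norm `‖f‖_𝒵 = ‖f‖_{H¹_α} + sup_x |f(x)|/Q(x)`. -/
def ZNorm (b A : ℝ) (f : ℝ → ℝ) : ℝ :=
  Real.sqrt (HalphaSq b A f) + ⨆ x : ℝ, |f x| / Qp b A x

/-- `m : ℝ → ℝ → ℝ` (time then space) solves the b-family equation in momentum form,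
with velocity `u` satisfying `m = u - u_xx` and `m_t + u m_x + b u_x m = 0`. -/
def IsBFamilySolution (b : ℝ) (m u : ℝ → ℝ → ℝ) : Prop :=
  (∀ t x, m t x = u t x - deriv (deriv (u t)) x) ∧
  ∀ t x, deriv (fun s => m s x) t + u t x * deriv (m t) x + b * deriv (u t) x * m t x = 0

/-- `(v, h)` solves the linearization of the b-family equation around the lefton:
`h - h_xx = v` and `v_t = ∂_x(q h_xx + (b-1) q' h_x - (b+1) q h + q'' h)`. -/
def IsLinearizedSolution (b A : ℝ) (v h : ℝ → ℝ → ℝ) : Prop :=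
  (∀ t x, h t x - deriv (deriv (h t)) x = v t x) ∧
  ∀ t x, deriv (fun s => v s x) t =
    deriv (fun y => qp b A y * deriv (deriv (h t)) y
      + (b - 1) * deriv (qp b A) y * deriv (h t) y
      - (b + 1) * qp b A y * h t y + deriv (deriv (qp b A)) y * h t y) x

/-- The quadratic form `(𝓛η, η) = (2k/b²)∫ η'² α − (2k(b+1)/b)∫ η² α`. -/
def quadFormL (b A : ℝ) (η : ℝ → ℝ) : ℝ :=
  2 * kP b A / b ^ 2 * (∫ x, deriv η x ^ 2 * alphaP b A x)
    - 2 * kP b A * (b + 1) / b * (∫ x, η x ^ 2 * alphaP b A x)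

/-- The monotonicity weight `ψ_L(x) = (2/π) arctan(exp(νx/L))` with `L = 3 - b`. -/
def psiL (b : ℝ) (x : ℝ) : ℝ :=
  2 / Real.pi * Real.arctan (Real.exp (nuP b * x / (3 - b)))

/-!
With `T(x) = tanh(νx)`, the lefton satisfies `Q' = b T Q`, `α' = -(1 + 2b) T α`,
`T' = ν (1 - T²)`, and `α Q (1 - T²) = Q^{-1/b-1} sech²(νx) = 1/k`. Expanding `(α g')'` by the
product rule, the identity becomes a polynomial identity in `T, Q, α, f, f', f'', f'''` modulo
the last relation, so it holds for every triple `(Q, α, T)` obeying these four relations.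
-/

lemma hasDerivAt_tanh_mul (c y : ℝ) :
    HasDerivAt (fun z => tanh (c * z)) (c * (1 - tanh (c * y) ^ 2)) y := by
  have hcy : HasDerivAt (fun z : ℝ => c * z) c y := by
    simpa using (hasDerivAt_id y).const_mul c
  have hcosh := (cosh_pos (c * y)).ne'
  rw [show (fun z => tanh (c * z)) = fun z => sinh (c * z) / cosh (c * z) from
    funext fun z => tanh_eq_sinh_div_cosh _]
  refine (hcy.sinh.div hcy.cosh hcosh).congr_deriv ?_
  rw [tanh_eq_sinh_div_cosh]
  field_simp

section ProfileIdentity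

variable {Q α T f : ℝ → ℝ} {b ν : ℝ}

lemma hasDerivAt_neg_mul_deriv_add_deriv_mul
    (hQ : ∀ y, HasDerivAt Q (b * T y * Q y) y)
    (hT : ∀ y, HasDerivAt T (ν * (1 - T y ^ 2)) y)
    (hf : Differentiable ℝ f) (hf' : Differentiable ℝ (deriv f)) (y : ℝ) :
    HasDerivAt (fun z => -(b * Q z * deriv f z + deriv Q z * f z))
      (-(b * Q y * deriv (deriv f) y + b * (b + 1) * T y * Q y * deriv f y
        + (b * ν * (1 - T y ^ 2) + b ^ 2 * T y ^ 2) * Q y * f y)) y := by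
  have hQd : deriv Q = fun z => b * T z * Q z := funext fun z => (hQ z).deriv
  rw [hQd]
  refine ((((hQ y).const_mul b).mul (hf' y).hasDerivAt).add
    ((((hT y).const_mul b).mul (hQ y)).mul (hf y).hasDerivAt)).neg.congr_deriv ?_
  simp only [Pi.mul_apply]
  ring

theorem weighted_operator_identity (hν : ν = -(b + 1) / 2)
    (hQ : ∀ y, HasDerivAt Q (b * T y * Q y) y)
    (hα : ∀ y, HasDerivAt α (-(1 + 2 * b) * T y * α y) y)
    (hT : ∀ y, HasDerivAt T (ν * (1 - T y ^ 2)) y)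
    (hf : Differentiable ℝ f) (hf' : Differentiable ℝ (deriv f))
    (hf'' : Differentiable ℝ (deriv (deriv f))) {k x : ℝ}
    (hk : α x * Q x * (1 - T x ^ 2) = 1 / k) :
    deriv (fun y => α y * deriv (fun z => -(b * Q z * deriv f z + deriv Q z * f z)) y) x
        + b * (b + 1) * α x * (-(b * Q x * deriv f x + deriv Q x * f x))
      = -b * (α x * Q x) * (deriv (deriv (deriv f)) x - deriv f x)
        + (b ^ 2 - b ^ 3) / (2 * k) * deriv f x := by
  have hg := hasDerivAt_neg_mul_deriv_add_deriv_mul hQ hT hf hf'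
  have hQd : deriv Q = fun z => b * T z * Q z := funext fun z => (hQ z).deriv
  have hG : HasDerivAt (fun y => α y * -(b * Q y * deriv (deriv f) y
      + b * (b + 1) * T y * Q y * deriv f y
      + (b * ν * (1 - T y ^ 2) + b ^ 2 * T y ^ 2) * Q y * f y)) _ x :=
    (hα x).mul ((((hQ x).const_mul b).mul (hf'' x).hasDerivAt).add
      ((((hT x).const_mul (b * (b + 1))).mul (hQ x)).mul (hf' x).hasDerivAt)
      |>.add (((((((hT x).pow 2).const_sub 1).const_mul (b * ν)).add
        (((hT x).pow 2).const_mul (b ^ 2))).mul (hQ x)).mul (hf x).hasDerivAt) |>.neg)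
  rw [show (fun y => α y * deriv (fun z => -(b * Q z * deriv f z + deriv Q z * f z)) y)
      = _ from funext fun y => congrArg (α y * ·) (hg y).deriv, hG.deriv, hQd]
  subst hν
  simp only [Pi.mul_apply, Pi.add_apply, Pi.pow_apply]
  linear_combination (b ^ 2 - b ^ 3) / 2 * deriv f x * hk

end ProfileIdentity

lemma Qp_pos {b A : ℝ} (hb : b < 1) (hA : 0 < A) (x : ℝ) : 0 < Qp b A x := by
  have : 0 < A * (1 - b) / 2 := by nlinarith
  unfold Qp; positivity

lemma hasDerivAt_Qp (b A y : ℝ) :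
    HasDerivAt (Qp b A) (b * tanh (nuP b * y) * Qp b A y) y := by
  have hνy : HasDerivAt (fun z : ℝ => nuP b * z) (nuP b) y := by
    simpa using (hasDerivAt_id y).const_mul (nuP b)
  have hcosh := cosh_pos (nuP b * y)
  refine ((hνy.cosh.rpow_const (p := b / nuP b) (Or.inl hcosh.ne')).const_mul
    (A * (1 - b) / 2)).congr_deriv ?_
  rcases eq_or_ne (nuP b) 0 with hν | hν
  · simp [hν]
  rw [tanh_eq_sinh_div_cosh, Real.rpow_sub_one hcosh.ne', Qp]
  field_simp

lemma hasDerivAt_alphaP {b A : ℝ} (hb0 : b ≠ 0) (hb : b < 1) (hA : 0 < A) (y : ℝ) :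
    HasDerivAt (alphaP b A) (-(1 + 2 * b) * tanh (nuP b * y) * alphaP b A y) y := by
  have hQ := (Qp_pos hb hA y).ne'
  refine ((hasDerivAt_Qp b A y).rpow_const (p := -1 / b - 2) (Or.inl hQ)).congr_deriv ?_
  rw [Real.rpow_sub_one hQ, alphaP]
  field_simp
  ring

lemma alphaP_mul_Qp {b A : ℝ} (hb : b < 1) (hA : 0 < A) (x : ℝ) :
    alphaP b A x * Qp b A x = Qp b A x ^ (-1 / b - 1) := by
  rw [alphaP, ← Real.rpow_add_one (Qp_pos hb hA x).ne']
  ring_nf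

lemma Qp_rpow_neg_inv_sub_one {b A : ℝ} (hb0 : b ≠ 0) (hb1 : b + 1 ≠ 0) (hb : b < 1) (hA : 0 < A)
    (x : ℝ) : Qp b A x ^ (-1 / b - 1) = cosh (nuP b * x) ^ 2 / kP b A := by
  have hC : 0 < A * (1 - b) / 2 := by nlinarith
  have hexp : b / nuP b * (-1 / b - 1) = 2 := by
    unfold nuP; field_simp; ring
  rw [Qp, Real.mul_rpow hC.le (by positivity), ← Real.rpow_mul (cosh_pos _).le, hexp, kP,
    Real.rpow_two, eq_div_iff (by positivity), mul_right_comm, ← Real.rpow_add hC]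
  rw [show -1 / b - 1 + (1 / b + 1) = 0 by ring, Real.rpow_zero, one_mul]

lemma alphaP_mul_Qp_mul_one_sub_tanh_sq {b A : ℝ} (hb0 : b ≠ 0) (hb1 : b + 1 ≠ 0) (hb : b < 1)
    (hA : 0 < A) (x : ℝ) :
    alphaP b A x * Qp b A x * (1 - tanh (nuP b * x) ^ 2) = 1 / kP b A := by
  rw [alphaP_mul_Qp hb hA, Qp_rpow_neg_inv_sub_one hb0 hb1 hb hA, tanh_eq_sinh_div_cosh,
    div_pow]
  have hcosh := (cosh_pos (nuP b * x)).ne'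
  field_simp
  linear_combination (kP b A)⁻¹ * cosh_sq_sub_sinh_sq (nuP b * x)

/-- **Appendix operator identity II**: for smooth `f`, with `g = −(b Q f' + Q' f)`,
`(α g')' + b(b+1) α g = −b Q^{−1/b−1}(f''' − f') + ((b²−b³)/(2k)) f'`. -/
theorem appendix_operator_identity_II (b A : ℝ) (hb : b < -1) (hA : 0 < A)
    (f : ℝ → ℝ) (hf : ContDiff ℝ (⊤ : ℕ∞) f) :
    ∀ x : ℝ,
      deriv (fun y => alphaP b A y
          * deriv (fun z => -(b * Qp b A z * deriv f z + deriv (Qp b A) z * f z)) y) x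
        + b * (b + 1) * alphaP b A x
          * (-(b * Qp b A x * deriv f x + deriv (Qp b A) x * f x))
      = -b * Qp b A x ^ (-1 / b - 1) * (deriv (deriv (deriv f)) x - deriv f x)
        + (b ^ 2 - b ^ 3) / (2 * kP b A) * deriv f x := by
  intro x
  have hb0 : b ≠ 0 := by linarith
  have hb1 : b + 1 ≠ 0 := by linarith
  have hb' : b < 1 := by linarith
  have hdiff (n : ℕ) : Differentiable ℝ (deriv^[n] f) :=
    (hf.iterate_deriv n).differentiable (by simp)
  rw [← alphaP_mul_Qp hb' hA]
  exact weighted_operator_identity rfl (hasDerivAt_Qp b A) (hasDerivAt_alphaP hb0 hb' hA)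
    (hasDerivAt_tanh_mul (nuP b)) (hdiff 0) (hdiff 1) (hdiff 2)
    (alphaP_mul_Qp_mul_one_sub_tanh_sq hb0 hb1 hb' hA x)
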